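/- arXiv:2009.14388 — 6 statements merged into one kernel-verified Lean document; each statement's English description precedes it below -/
import Mathlib

section
/- Let N users each hold a vector xi ∈ R^m with entries in [r1, r2], each partitioned into G equal segments, where the l-th segment of user i is quantized with K_i^l levels (quantization interval (r2−r1)/(K_i^l−1)), independently across all coordinates and users. Then E[‖(1/N)∑ x̄i − (1/N)∑ xi‖²] ≤ ((r2−r1)²/(4N²))·(m/G)·∑_{i=1}^{N} ∑_{l=0}^{G−1} 1/(K_i^l−1)². -/
open MeasureTheory ProbabilityTheory Finset

/-! In coordinate `k` the aggregation error is `N⁻¹` times a sum of independent centred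
quantization errors, so its second moment is `N⁻²` times the sum of their variances. Each
variance is at most `((r2 - r1) / (K - 1))² / 4`, where `K` is the level count of the segment
containing `k`; since every segment has `m / G` coordinates, summing over `k` gives `m / G`
copies of the sum over segments. -/

section

variable {Ω : Type*} [MeasurableSpace Ω] {μ : Measure Ω} [IsFiniteMeasure μ]

theorem memLp_two_of_integrable_sq_sub {X : Ω → ℝ} {c : ℝ} (hX : AEStronglyMeasurable X μ)
    (h : Integrable (fun ω => (X ω - c) ^ 2) μ) : MemLp X 2 μ := by
  simpa using ((memLp_two_iff_integrable_sq (hX.sub aestronglyMeasurable_const)).2 h).add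
    (memLp_const c)

theorem integral_sq_sum_sub_sum_of_pairwise_indepFun {ι : Type*} [Fintype ι] {X : ι → Ω → ℝ}
    {c : ι → ℝ} (hX : ∀ i, MemLp (X i) 2 μ) (hmean : ∀ i, ∫ ω, X i ω ∂μ = c i)
    (hind : Pairwise fun i j => X i ⟂ᵢ[μ] X j) :
    ∫ ω, (∑ i, X i ω - ∑ i, c i) ^ 2 ∂μ = ∑ i, ∫ ω, (X i ω - c i) ^ 2 ∂μ := by
  have hvar := IndepFun.variance_sum (s := univ) (fun i _ => hX i) fun i _ j _ hij => hind hij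
  rw [variance_eq_integral (memLp_finsetSum' _ fun i _ => hX i).aemeasurable] at hvar
  simp only [Finset.sum_apply] at hvar
  rw [integral_finsetSum _ fun i _ => (hX i).integrable one_le_two] at hvar
  simpa only [variance_eq_integral (hX _).aemeasurable, hmean] using hvar

end

theorem sum_comp_of_card_fiber_eq {α β M : Type*} [Fintype α] [Fintype β] [DecidableEq β]
    [AddCommMonoid M] (f : β → M) (g : α → β) {n : ℕ} (hg : ∀ b, #{a | g a = b} = n) :
    ∑ a, f (g a) = n • ∑ b, f b := by
  rw [← sum_fiberwise univ g, smul_sum]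
  refine sum_congr rfl fun b _ => ?_
  rw [sum_congr rfl fun a ha => by rw [(mem_filter.1 ha).2], sum_const, hg]

theorem heterosag_aggregate_error_general {Ω : Type*} [MeasureSpace Ω]
    (hP : IsProbabilityMeasure (ℙ : Measure Ω)) (m G N : ℕ)
    (hdvd : G ∣ m)
    (seg : Fin m → Fin G)
    (hseg : ∀ l : Fin G, (univ.filter (fun k => seg k = l)).card = m / G)
    (r1 r2 : ℝ)
    (K : Fin N → Fin G → ℕ)
    (x : Fin N → Fin m → ℝ)
    (xq : Ω → Fin N → Fin m → ℝ)
    (hmeas : ∀ i k, Measurable (fun ω => xq ω i k))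
    (hind : iIndepFun (fun (p : Fin N × Fin m) ω => xq ω p.1 p.2) ℙ)
    (hint : ∀ i k, Integrable (fun ω => (xq ω i k - x i k) ^ 2) ℙ)
    (hunb : ∀ i k, ∫ ω, xq ω i k ∂ℙ = x i k)
    (hvar : ∀ i k, ∫ ω, (xq ω i k - x i k) ^ 2 ∂ℙ
      ≤ ((r2 - r1) / ((K i (seg k) : ℝ) - 1)) ^ 2 / 4) :
    ∫ ω, ∑ k, ((N : ℝ)⁻¹ * ∑ i, xq ω i k - (N : ℝ)⁻¹ * ∑ i, x i k) ^ 2 ∂ℙ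
      ≤ ((r2 - r1) ^ 2 / (4 * (N : ℝ) ^ 2)) * ((m : ℝ) / G) *
        ∑ i, ∑ l, 1 / ((K i l : ℝ) - 1) ^ 2 := by
  have hL2 : ∀ i k, MemLp (fun ω => xq ω i k) 2 ℙ := fun i k =>
    memLp_two_of_integrable_sq_sub (hmeas i k).aestronglyMeasurable (hint i k)
  have hcoord : ∀ k, ∫ ω, ((N : ℝ)⁻¹ * ∑ i, xq ω i k - (N : ℝ)⁻¹ * ∑ i, x i k) ^ 2 ∂ℙ
      = ((N : ℝ) ^ 2)⁻¹ * ∑ i, ∫ ω, (xq ω i k - x i k) ^ 2 ∂ℙ := fun k => by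
    simp_rw [← mul_sub, mul_pow, inv_pow]
    rw [integral_const_mul, integral_sq_sum_sub_sum_of_pairwise_indepFun (fun i => hL2 i k)
      (fun i => hunb i k) fun i j hij => hind.indepFun (i := (i, k)) (j := (j, k)) (by simp [hij])]
  have hcoord_int : ∀ k, Integrable
      (fun ω => ((N : ℝ)⁻¹ * ∑ i, xq ω i k - (N : ℝ)⁻¹ * ∑ i, x i k) ^ 2) ℙ := fun k =>
    (((memLp_finsetSum univ fun i _ => hL2 i k).const_mul _).sub (memLp_const _)).integrable_sq
  have hfiber (f : Fin G → ℝ) : ∑ k, f (seg k) = (m / G : ℝ) * ∑ l, f l := by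
    rw [sum_comp_of_card_fiber_eq f seg hseg, nsmul_eq_mul, Nat.cast_div_charZero hdvd]
  calc _ = ∑ k, ((N : ℝ) ^ 2)⁻¹ * ∑ i, ∫ ω, (xq ω i k - x i k) ^ 2 ∂ℙ := by
        rw [integral_finsetSum _ fun k _ => hcoord_int k]
        exact sum_congr rfl fun k _ => hcoord k
    _ ≤ ∑ k, ((N : ℝ) ^ 2)⁻¹ * ∑ i, ((r2 - r1) / ((K i (seg k) : ℝ) - 1)) ^ 2 / 4 := by
        gcongr with k _ i _
        exact hvar i k
    _ = _ := by
        rw [← mul_sum, sum_comm]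
        have hterm (i l) : ((r2 - r1) / ((K i l : ℝ) - 1)) ^ 2 / 4
            = (r2 - r1) ^ 2 / 4 * (1 / ((K i l : ℝ) - 1) ^ 2) := by
          rw [div_pow]; ring
        rw [sum_congr rfl fun i _ => hfiber fun l => ((r2 - r1) / ((K i l : ℝ) - 1)) ^ 2 / 4]
        simp_rw [hterm, ← mul_sum]
        ring

/-- `N` users hold vectors `x i ∈ [r1,r2]^m`, each partitioned into `G` equal segments
(coordinate `k` lies in segment `seg k`, each segment of size `m/G`); the `l`-th segment
of user `i` is quantized with a `K i l`-level unbiased stochastic quantizer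
(quantization interval `(r2−r1)/(K i l − 1)`), independently across all coordinates and
users. Then
`E‖(1/N)∑ x̄ i − (1/N)∑ x i‖² ≤ ((r2−r1)²/(4N²)) (m/G) ∑_i ∑_l 1/(K i l − 1)²`. -/
theorem heterosag_aggregate_error {Ω : Type*} [MeasureSpace Ω]
    (hP : IsProbabilityMeasure (ℙ : Measure Ω)) (m G N : ℕ)
    (hG : 1 ≤ G) (hN : 1 ≤ N) (hdvd : G ∣ m)
    (seg : Fin m → Fin G)
    (hseg : ∀ l : Fin G, (univ.filter (fun k => seg k = l)).card = m / G)
    (r1 r2 : ℝ) (hr : r1 < r2)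
    (K : Fin N → Fin G → ℕ) (hK : ∀ i l, 2 ≤ K i l)
    (x : Fin N → Fin m → ℝ) (hx : ∀ i k, r1 ≤ x i k ∧ x i k ≤ r2)
    (xq : Ω → Fin N → Fin m → ℝ)
    (hmeas : ∀ i k, Measurable (fun ω => xq ω i k))
    (hind : iIndepFun (fun (p : Fin N × Fin m) ω => xq ω p.1 p.2) ℙ)
    (hint : ∀ i k, Integrable (fun ω => (xq ω i k - x i k) ^ 2) ℙ)
    (hunb : ∀ i k, ∫ ω, xq ω i k ∂ℙ = x i k)
    (hvar : ∀ i k, ∫ ω, (xq ω i k - x i k) ^ 2 ∂ℙ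
      ≤ ((r2 - r1) / ((K i (seg k) : ℝ) - 1)) ^ 2 / 4) :
    ∫ ω, ∑ k, ((N : ℝ)⁻¹ * ∑ i, xq ω i k - (N : ℝ)⁻¹ * ∑ i, x i k) ^ 2 ∂ℙ
      ≤ ((r2 - r1) ^ 2 / (4 * (N : ℝ) ^ 2)) * ((m : ℝ) / G) *
        ∑ i, ∑ l, 1 / ((K i l : ℝ) - 1) ^ 2 :=
  heterosag_aggregate_error_general hP m G N hdvd seg hseg r1 r2 K x xq hmeas hind hint hunb hvar
end

section
/- Under the HeteroSAg segment assignment (each user in group g, 0 ≤ g ≤ G−1, of n users quantizes G−g segments at level K_g and one segment at each level K_0,...,K_{g−1}), the aggregate quantization error bound satisfies ((r2−r1)²/(4N²))·(m/G)·∑_i ∑_l 1/(K_i^l−1)² = ((r2−r1)²/(4N²))·(m/G)·n·∑_{g=0}^{G−1} (2(G−g)−1)/(K_g−1)². -/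
open Finset

lemma sum_comp_eq_sum_card_mul {α β : Type*} [Fintype α] [Fintype β] [DecidableEq β]
    (f : α → β) (w : β → ℝ) :
    ∑ a, w (f a) = ∑ b, ((univ.filter (fun a => f a = b)).card : ℝ) * w b := by
  rw [← Finset.sum_fiberwise univ f (fun a => w (f a))]
  refine Finset.sum_congr rfl fun b _ => ?_
  rw [Finset.sum_congr rfl (fun a ha => by rw [(Finset.mem_filter.mp ha).2]),
    Finset.sum_const, nsmul_eq_mul]

/-- Under the HeteroSAg segment assignment (each user in group `g` of `n` users
quantizes `G − g` segments at level `K_g` and one segment at each of the levels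
`K_0, …, K_{g−1}`), the aggregate quantization error bound satisfies
`((r2−r1)²/(4N²))·(m/G)·∑_i ∑_l 1/(K_i^l−1)²
   = ((r2−r1)²/(4N²))·(m/G)·n·∑_g (2(G−g)−1)/(K_g−1)²`.
Here `grp i` is the group of user `i` and `qnt i l` the index of the quantizer used by
user `i` on its `l`-th segment, so that `K_i^l = K (qnt i l)`. -/
theorem heterosag_error_identity (G n N : ℕ) (hG : 1 ≤ G) (hn : 1 ≤ n)
    (hN : N = n * G) (m r1 r2 : ℝ) (K : Fin G → ℝ) (hK : ∀ g, 1 < K g)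
    (grp : Fin N → Fin G)
    (hgrp : ∀ g : Fin G, (univ.filter (fun i => grp i = g)).card = n)
    (qnt : Fin N → Fin G → Fin G)
    (hown : ∀ i : Fin N,
      (univ.filter (fun l => qnt i l = grp i)).card = G - ((grp i : ℕ)))
    (hlow : ∀ i : Fin N, ∀ g' : Fin G, (g' : ℕ) < ((grp i : ℕ)) →
      (univ.filter (fun l => qnt i l = g')).card = 1) :
    ((r2 - r1) ^ 2 / (4 * (N : ℝ) ^ 2)) * (m / G) *
        ∑ i : Fin N, ∑ l : Fin G, 1 / (K (qnt i l) - 1) ^ 2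
      = ((r2 - r1) ^ 2 / (4 * (N : ℝ) ^ 2)) * (m / G) * (n : ℝ) *
        ∑ g : Fin G, (2 * ((G : ℝ) - (g : ℕ)) - 1) / (K g - 1) ^ 2 := by
  set w : Fin G → ℝ := fun g => 1 / (K g - 1) ^ 2 with hw
  set F : Fin G → ℝ := fun g =>
    ((G : ℝ) - (g : ℕ)) * w g + ∑ g' ∈ univ.filter (fun g' : Fin G => (g' : ℕ) < (g : ℕ)), w g'
    with hF
  -- counts of fibers of qnt i
  have hcount_lt : ∀ (i : Fin N) (g : Fin G),
      (univ.filter (fun g' : Fin G => (g' : ℕ) < (g : ℕ))).card = (g : ℕ) := by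
    intro i g
    simp only [← Fin.lt_def]
    rw [Finset.filter_gt_eq_Iio, Fin.card_Iio]
  -- segments assigned to quantizers above a user's group: zero
  have hhigh : ∀ i : Fin N, ∀ g' : Fin G, ((grp i : ℕ)) < (g' : ℕ) →
      (univ.filter (fun l => qnt i l = g')).card = 0 := by
    intro i g' hgt
    have htot : ∑ b : Fin G, (univ.filter (fun l => qnt i l = b)).card = G := by
      rw [← Finset.card_eq_sum_card_fiberwise (fun l _ => Finset.mem_univ (qnt i l))]
      simp
    -- split off the lower part
    have hsplit := Finset.sum_filter_add_sum_filter_not (univ : Finset (Fin G))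
      (fun b => (b : ℕ) < (grp i : ℕ)) (fun b => (univ.filter (fun l => qnt i l = b)).card)
    have hlowsum : ∑ b ∈ univ.filter (fun b : Fin G => (b : ℕ) < (grp i : ℕ)),
        (univ.filter (fun l => qnt i l = b)).card = (grp i : ℕ) := by
      rw [Finset.sum_congr rfl (fun b hb => hlow i b (Finset.mem_filter.mp hb).2),
        Finset.sum_const, smul_eq_mul, mul_one, hcount_lt i (grp i)]
    have hupsum : ∑ b ∈ univ.filter (fun b : Fin G => ¬ (b : ℕ) < (grp i : ℕ)),
        (univ.filter (fun l => qnt i l = b)).card = G - (grp i : ℕ) := by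
      omega
    have hmem : grp i ∈ univ.filter (fun b : Fin G => ¬ (b : ℕ) < (grp i : ℕ)) := by
      simp
    rw [← Finset.add_sum_erase _ _ hmem, hown i] at hupsum
    have hz : ∑ b ∈ (univ.filter (fun b : Fin G => ¬ (b : ℕ) < (grp i : ℕ))).erase (grp i),
        (univ.filter (fun l => qnt i l = b)).card = 0 := by omega
    have hmem' : g' ∈ (univ.filter (fun b : Fin G => ¬ (b : ℕ) < (grp i : ℕ))).erase (grp i) := by
      refine Finset.mem_erase.mpr ⟨?_, ?_⟩
      · intro h; rw [h] at hgt; omega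
      · simp; omega
    exact (Finset.sum_eq_zero_iff.mp hz) g' hmem'
  -- per-user sum
  have claim1 : ∀ i : Fin N, ∑ l : Fin G, w (qnt i l) = F (grp i) := by
    intro i
    rw [sum_comp_eq_sum_card_mul (qnt i) w]
    rw [← Finset.sum_filter_add_sum_filter_not (univ : Finset (Fin G))
      (fun b => (b : ℕ) < (grp i : ℕ))]
    have h1 : ∑ b ∈ univ.filter (fun b : Fin G => (b : ℕ) < (grp i : ℕ)),
        ((univ.filter (fun l => qnt i l = b)).card : ℝ) * w b
        = ∑ b ∈ univ.filter (fun b : Fin G => (b : ℕ) < (grp i : ℕ)), w b := by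
      refine Finset.sum_congr rfl fun b hb => ?_
      rw [hlow i b (Finset.mem_filter.mp hb).2]; simp
    have h2 : ∑ b ∈ univ.filter (fun b : Fin G => ¬ (b : ℕ) < (grp i : ℕ)),
        ((univ.filter (fun l => qnt i l = b)).card : ℝ) * w b
        = ((G : ℝ) - (grp i : ℕ)) * w (grp i) := by
      rw [Finset.sum_eq_single_of_mem (grp i) (by simp)]
      · rw [hown i, Nat.cast_sub (le_of_lt (grp i).isLt)]
      · intro b hb hne
        have : (grp i : ℕ) < (b : ℕ) := by
          have h3 := (Finset.mem_filter.mp hb).2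
          have h4 : (b : ℕ) ≠ (grp i : ℕ) := fun h => hne (Fin.ext h)
          omega
        rw [hhigh i b this]; simp
    rw [h1, h2, hF]; ring
  -- group users
  have claim2 : ∑ i : Fin N, ∑ l : Fin G, w (qnt i l) = (n : ℝ) * ∑ g : Fin G, F g := by
    rw [Finset.sum_congr rfl (fun i _ => claim1 i), sum_comp_eq_sum_card_mul grp F,
      Finset.mul_sum]
    exact Finset.sum_congr rfl fun g _ => by rw [hgrp g]
  -- evaluate the group sum
  have claim3 : ∑ g : Fin G, F g = ∑ g : Fin G, (2 * ((G : ℝ) - (g : ℕ)) - 1) * w g := by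
    simp only [hF]
    rw [Finset.sum_add_distrib]
    have hswap : ∑ g : Fin G, ∑ g' ∈ univ.filter (fun g' : Fin G => (g' : ℕ) < (g : ℕ)), w g'
        = ∑ g' : Fin G, ((G : ℝ) - 1 - (g' : ℕ)) * w g' := by
      simp only [Finset.sum_filter]
      rw [Finset.sum_comm]
      refine Finset.sum_congr rfl fun g' _ => ?_
      rw [← Finset.sum_filter]
      rw [Finset.sum_congr rfl (fun g hg => rfl), Finset.sum_const, nsmul_eq_mul]
      congr 1
      have hcard : (univ.filter (fun g : Fin G => (g' : ℕ) < (g : ℕ))).card = G - 1 - g' := by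
        simp only [← Fin.lt_def]
        rw [Finset.filter_lt_eq_Ioi, Fin.card_Ioi]
      rw [hcard]
      have h1 : (g' : ℕ) ≤ G - 1 := by have := g'.isLt; omega
      rw [Nat.cast_sub h1, Nat.cast_sub (by omega : 1 ≤ G)]
      simp
    rw [hswap, ← Finset.sum_add_distrib]
    refine Finset.sum_congr rfl fun g _ => ?_
    ring
  -- assemble
  have hfinal : ∑ i : Fin N, ∑ l : Fin G, (1 : ℝ) / (K (qnt i l) - 1) ^ 2
      = (n : ℝ) * ∑ g : Fin G, (2 * ((G : ℝ) - (g : ℕ)) - 1) / (K g - 1) ^ 2 := by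
    have : ∀ g : Fin G, (2 * ((G : ℝ) - (g : ℕ)) - 1) / (K g - 1) ^ 2
        = (2 * ((G : ℝ) - (g : ℕ)) - 1) * w g := fun g => by
      rw [hw]; ring
    rw [Finset.sum_congr rfl (fun g _ => this g), ← claim3, ← claim2]
  rw [hfinal]; ring
end

section
/- Let B be the G×G matrix produced by: for g = 0,...,G−2 and r = 0,...,G−g−2, setting B((2g+r) mod G, g) = B((2g+r) mod G, g+r+1) = g, with all unassigned entries equal to *. Then every column of B contains exactly one entry equal to *. -/
attribute [local instance] Classical.propDecidable

/-- `SSassign G g r l c` holds iff Algorithm 1 (with loop indices `g = 0,…,G−2` and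
`r = 0,…,G−g−2`) writes the value `g` into row `l = (2g+r) mod G`, column `c`
(where `c = g` or `c = g+r+1`) of the HeteroSAg segment-selection matrix. -/
def SSassign (G g r l c : ℕ) : Prop :=
  g + r + 2 ≤ G ∧ l = (2 * g + r) % G ∧ (c = g ∨ c = g + r + 1)

/-- Cell `(l, c)` of the SS matrix holds `*` iff it is never assigned by the algorithm. -/
def SSstar (G l c : ℕ) : Prop := ∀ g r, ¬ SSassign G g r l c

lemma modval (G a l : ℕ) (hl : l < G) (h : a = l ∨ a = l + G ∨ a = l + 2 * G) :
    a % G = l := by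
  rcases h with h | h | h <;> subst h
  · exact Nat.mod_eq_of_lt hl
  · rw [Nat.add_mod_right]; exact Nat.mod_eq_of_lt hl
  · rw [two_mul, ← add_assoc, Nat.add_mod_right, Nat.add_mod_right]
    exact Nat.mod_eq_of_lt hl

lemma modcases (G a : ℕ) (hG : 0 < G) (h : a < 3 * G) :
    a % G = a ∨ (G ≤ a ∧ a % G = a - G) ∨ (2 * G ≤ a ∧ a % G = a - 2 * G) := by
  rcases Nat.lt_or_ge a G with h1 | h1
  · exact Or.inl (Nat.mod_eq_of_lt h1)
  rcases Nat.lt_or_ge a (2 * G) with h2 | h2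
  · refine Or.inr (Or.inl ⟨h1, ?_⟩)
    rw [Nat.mod_eq_sub_mod h1, Nat.mod_eq_of_lt (by omega)]
  · refine Or.inr (Or.inr ⟨h2, ?_⟩)
    rw [Nat.mod_eq_sub_mod h1, Nat.mod_eq_sub_mod (by omega), Nat.mod_eq_of_lt (by omega)]
    omega

/-- Every column of the HeteroSAg SS matrix contains exactly one entry equal to `*`. -/
theorem ss_matrix_one_star_per_column (G : ℕ) (hG : 2 ≤ G) (c : ℕ) (hc : c < G) :
    ((Finset.range G).filter (fun l => SSstar G l c)).card = 1 := by
  have hG0 : 0 < G := by omega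
  have hstar : ∀ l, l < G → (SSstar G l c ↔ l = (2 * c + G - 1) % G) := by
    intro l hl
    constructor
    · intro h
      by_contra hne
      obtain ⟨s, hs1, hs2⟩ :
          ∃ s, s < G ∧ (2 * c + s = l ∨ 2 * c + s = l + G ∨ 2 * c + s = l + 2 * G) := by
        refine ⟨if 2 * c ≤ l then l - 2 * c else if 2 * c ≤ l + G then l + G - 2 * c
          else l + 2 * G - 2 * c, ?_, ?_⟩ <;> split_ifs <;> omega
      have hsne : s ≠ G - 1 := by
        intro hseq
        apply hne
        have h1 := modval G (2 * c + s) l hl hs2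
        have h2 : 2 * c + s = 2 * c + G - 1 := by omega
        rw [h2] at h1
        exact h1.symm
      by_cases hcase : s + c + 2 ≤ G
      · exact h c s ⟨by omega, (modval G (2 * c + s) l hl hs2).symm, Or.inl rfl⟩
      · have hs3 : 2 * c + s = l + G ∨ 2 * c + s = l + 2 * G := by omega
        refine h (c + s + 1 - G) (G - s - 2) ⟨by omega, ?_, Or.inr (by omega)⟩
        exact (modval G (2 * (c + s + 1 - G) + (G - s - 2)) l hl (by omega)).symm
    · rintro hleq g r ⟨hgr, hlr, hcg⟩
      have hb1 : 2 * g + r < 3 * G := by omega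
      have hb2 : 2 * c + G - 1 < 3 * G := by omega
      have m1 := modcases G (2 * g + r) hG0 hb1
      have m2 := modcases G (2 * c + G - 1) hG0 hb2
      rcases m1 with m1 | ⟨_, m1⟩ | ⟨_, m1⟩ <;> rw [m1] at hlr <;>
        rcases m2 with m2 | ⟨_, m2⟩ | ⟨_, m2⟩ <;> rw [m2] at hleq <;> omega
  have hlt : (2 * c + G - 1) % G < G := Nat.mod_lt _ hG0
  have : ((Finset.range G).filter (fun l => SSstar G l c)) = {(2 * c + G - 1) % G} := by
    ext l
    simp only [Finset.mem_filter, Finset.mem_range, Finset.mem_singleton]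
    constructor
    · rintro ⟨h1, h2⟩; exact (hstar l h1).mp h2
    · rintro rfl; exact ⟨hlt, (hstar _ hlt).mpr rfl⟩
  rw [this, Finset.card_singleton]
end

section
/- Let B be the G×G HeteroSAg segment-selection matrix. For any two distinct columns g and g', there is at most one row l such that B(l,g) = B(l,g') and this common entry is a number (not *). -/
attribute [local instance] Classical.propDecidable

/-- `SSval G l c v` holds iff the `(l, c)` entry of the SS matrix is the number `v`. -/
def SSval (G l c v : ℕ) : Prop := ∃ r, SSassign G v r l c

lemma ss_key (G : ℕ) (hG : 2 ≤ G) (c c' : ℕ) (hne : c ≠ c') (l : ℕ)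
    (h : ∃ v, SSval G l c v ∧ SSval G l c' v) : l = (c + c' - 1) % G := by
  obtain ⟨v, ⟨r, hA, hl1, hc1⟩, ⟨r', hA', hl2, hc2⟩⟩ := h
  have hrG : r < G := by omega
  have hrG' : r' < G := by omega
  have h2 : (2 * v + r) % G = (2 * v + r') % G := hl1.symm.trans hl2
  have h3 : r ≡ r' [MOD G] := Nat.ModEq.add_left_cancel' (2 * v) h2
  have hrr : r = r' := by
    have h4 : r % G = r' % G := h3
    rwa [Nat.mod_eq_of_lt hrG, Nat.mod_eq_of_lt hrG'] at h4
  subst hrr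
  have hkey : 2 * v + r = c + c' - 1 := by
    rcases hc1 with h1 | h1 <;> rcases hc2 with h2 | h2 <;> omega
  rw [hl1, hkey]

/-- For any two distinct columns `c, c'` of the HeteroSAg SS matrix, there is at most one
row in which the two columns carry the same numbered entry. -/
theorem ss_matrix_at_most_one_common (G : ℕ) (hG : 2 ≤ G) (c c' : ℕ)
    (hc : c < G) (hc' : c' < G) (hne : c ≠ c') :
    ((Finset.range G).filter (fun l => ∃ v, SSval G l c v ∧ SSval G l c' v)).card ≤ 1 := by
  rw [Finset.card_le_one]
  intro a ha b hb
  simp only [Finset.mem_filter, Finset.mem_range] at ha hb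
  rw [ss_key G hG c c' hne a ha.2, ss_key G hG c c' hne b hb.2]
end

section
/- Let B be the G×G HeteroSAg segment-selection matrix with G odd. Then every row of B contains exactly one entry equal to *. -/
attribute [local instance] Classical.propDecidable

private lemma two_cancel (G c c' : ℕ) (hodd : Odd G) (hc : c < G) (hc' : c' < G)
    (h : 2 * c ≡ 2 * c' [MOD G]) : c = c' := by
  rcases le_total c c' with h1 | h1
  · have hd : G ∣ 2 * c' - 2 * c := (Nat.modEq_iff_dvd' (by omega)).1 h
    have he : 2 * c' - 2 * c = 2 * (c' - c) := by omega
    rw [he] at hd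
    have hdd : G ∣ (c' - c) := (hodd.coprime_two_right).dvd_of_dvd_mul_left hd
    have := Nat.eq_zero_of_dvd_of_lt hdd
    omega
  · have hd : G ∣ 2 * c - 2 * c' := (Nat.modEq_iff_dvd' (by omega)).1 h.symm
    have he : 2 * c - 2 * c' = 2 * (c - c') := by omega
    rw [he] at hd
    have hdd : G ∣ (c - c') := (hodd.coprime_two_right).dvd_of_dvd_mul_left hd
    have := Nat.eq_zero_of_dvd_of_lt hdd
    omega

private lemma star_imp_cong (G l c : ℕ) (hG : 3 ≤ G) (hl : l < G) (hc : c < G)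
    (hstar : SSstar G l c) : 2 * c ≡ l + 1 [MOD G] := by
  by_contra hcong
  set r0 := (l + 2 * G - 2 * c) % G with hr0
  have hr0lt : r0 < G := Nat.mod_lt _ (by omega)
  have hr0eq : r0 ≡ l + 2 * G - 2 * c [MOD G] := (Nat.mod_modEq _ _)
  by_cases hA : r0 + c + 2 ≤ G
  · -- witness g = c, r = r0
    apply hstar c r0
    refine ⟨by omega, ?_, Or.inl rfl⟩
    have : 2 * c + r0 ≡ 2 * c + (l + 2 * G - 2 * c) [MOD G] := hr0eq.add_left _
    have h2 : 2 * c + (l + 2 * G - 2 * c) = l + 2 * G := by omega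
    rw [h2] at this
    have h3 : l + 2 * G ≡ l [MOD G] := Nat.add_mul_mod_self_right l 2 G
    have := this.trans h3
    unfold Nat.ModEq at this
    rw [Nat.mod_eq_of_lt hl] at this
    omega
  · set g0 := (l + 1 + G - c) % G with hg0
    have hg0lt : g0 < G := Nat.mod_lt _ (by omega)
    have hg0eq : g0 ≡ l + 1 + G - c [MOD G] := Nat.mod_modEq _ _
    by_cases hB : g0 + 1 ≤ c
    · -- witness g = g0, r = c - g0 - 1
      apply hstar g0 (c - g0 - 1)
      refine ⟨by omega, ?_, Or.inr (by omega)⟩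
      have h1 : 2 * g0 + (c - g0 - 1) = g0 + (c - 1) := by omega
      have h2 : 2 * g0 + (c - g0 - 1) ≡ (l + 1 + G - c) + (c - 1) [MOD G] := by
        rw [h1]; exact hg0eq.add_right _
      have h3 : (l + 1 + G - c) + (c - 1) = l + G := by omega
      rw [h3] at h2
      have h4 : l + G ≡ l [MOD G] := Nat.add_mod_right l G
      have h5 := h2.trans h4
      unfold Nat.ModEq at h5
      rw [h5, Nat.mod_eq_of_lt hl]
    · -- both fail: derive the congruence, contradiction
      exfalso
      apply hcong
      -- g0 = (r0 + 1 + c) % G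
      have key : (r0 + 1 + c) % G = g0 := by
        have e1 : r0 + 1 + c ≡ (l + 2 * G - 2 * c) + 1 + c [MOD G] := by
          exact (hr0eq.add_right 1).add_right c
        have e2 : (l + 2 * G - 2 * c) + 1 + c = (l + 1 + G - c) + G := by omega
        have e3 : (l + 1 + G - c) + G ≡ l + 1 + G - c [MOD G] := by
          unfold Nat.ModEq; simp [Nat.add_mod_right]
        have := (e1.trans (e2 ▸ e3)).trans hg0eq.symm
        unfold Nat.ModEq at this
        rw [Nat.mod_eq_of_lt hg0lt] at this
        exact this
      have hge : r0 + c + 1 ≥ G := by omega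
      have hlt2 : r0 + 1 + c < 2 * G := by omega
      have : (r0 + 1 + c) % G = r0 + 1 + c - G := by
        rw [Nat.mod_eq_sub_mod (by omega)]
        exact Nat.mod_eq_of_lt (by omega)
      have hg0val : g0 = r0 + 1 + c - G := by omega
      -- g0 ≥ c (from ¬hB) forces r0 = G - 1
      have hr0top : r0 = G - 1 := by omega
      -- hence l + 2*G - 2*c ≡ G - 1 [MOD G], so 2*c ≡ l + 1 [MOD G]
      have e4 : l + 2 * G - 2 * c ≡ G - 1 [MOD G] := by
        rw [← hr0top]; exact hr0eq.symm
      have e5 : (l + 2 * G - 2 * c) + (2 * c + 1) ≡ (G - 1) + (2 * c + 1) [MOD G] :=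
        e4.add_right _
      have e6 : (l + 2 * G - 2 * c) + (2 * c + 1) = l + 1 + 2 * G := by omega
      have e7 : (G - 1) + (2 * c + 1) = 2 * c + G := by omega
      rw [e6, e7] at e5
      have e8 : l + 1 ≡ l + 1 + 2 * G [MOD G] :=
        (Nat.add_mul_mod_self_right (l + 1) 2 G).symm
      have e9 : 2 * c + G ≡ 2 * c [MOD G] := by
        unfold Nat.ModEq; simp [Nat.add_mod_right]
      exact ((e8.trans e5).trans e9).symm

private lemma cong_imp_star (G l c : ℕ) (hG : 3 ≤ G) (hl : l < G)
    (hcong : 2 * c ≡ l + 1 [MOD G]) : SSstar G l c := by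
  rintro g r ⟨hle, hlmod, hcase⟩
  have hml : (2 * g + r) ≡ l [MOD G] := by
    unfold Nat.ModEq
    rw [Nat.mod_eq_of_lt hl, ← hlmod]
  rcases hcase with hcg | hcg
  · -- c = g : 2g + r ≡ l, 2c = 2g ≡ l+1, so l + r + ... ⇒ G ∣ r + 1
    subst hcg
    -- 2*c + (r + 1) ≡ l + 1 + ... derive G ∣ r + 1
    have h1 : 2 * c + r + 1 ≡ l + 1 [MOD G] := by
      have := hml.add_right 1
      simpa [Nat.add_assoc] using this
    have h2 : 2 * c + (r + 1) ≡ 2 * c + 0 [MOD G] := by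
      have := h1.trans hcong.symm
      simpa [Nat.add_assoc] using this
    have h3 : r + 1 ≡ 0 [MOD G] := Nat.ModEq.add_left_cancel' _ h2
    have h4 : G ∣ r + 1 := (Nat.modEq_zero_iff_dvd).1 h3
    have := Nat.le_of_dvd (by omega) h4
    omega
  · -- c = g + r + 1 : 2c = 2g + 2r + 2 = (2g+r) + (r+2) ≡ l + 1 ⇒ G ∣ r + 1
    subst hcg
    have h1 : (2 * g + r) + (r + 2) ≡ l + (r + 2) [MOD G] := hml.add_right _
    have h2 : 2 * (g + r + 1) = (2 * g + r) + (r + 2) := by ring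
    have h3 : l + (r + 2) ≡ l + 1 [MOD G] := (h1.symm).trans (h2 ▸ hcong)
    have h4 : (r + 1) + (l + 1) ≡ 0 + (l + 1) [MOD G] := by
      have : l + (r + 2) = (r + 1) + (l + 1) := by omega
      rw [this] at h3
      simpa using h3
    have h5 : r + 1 ≡ 0 [MOD G] := Nat.ModEq.add_right_cancel' _ h4
    have h6 : G ∣ r + 1 := (Nat.modEq_zero_iff_dvd).1 h5
    have := Nat.le_of_dvd (by omega) h6
    omega

/-- For odd `G ≥ 3`, every row of the HeteroSAg SS matrix contains exactly one `*`. -/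
theorem ss_matrix_one_star_per_row_odd (G : ℕ) (hG : 3 ≤ G) (hodd : Odd G)
    (l : ℕ) (hl : l < G) :
    ((Finset.range G).filter (fun c => SSstar G l c)).card = 1 := by
  set c0 := ((l + 1) * ((G + 1) / 2)) % G with hc0
  have hc0lt : c0 < G := Nat.mod_lt _ (by omega)
  have hc0cong : 2 * c0 ≡ l + 1 [MOD G] := by
    have h1 : c0 ≡ (l + 1) * ((G + 1) / 2) [MOD G] := Nat.mod_modEq _ _
    have h2 : 2 * c0 ≡ 2 * ((l + 1) * ((G + 1) / 2)) [MOD G] := h1.mul_left 2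
    have h3 : 2 * ((l + 1) * ((G + 1) / 2)) = (l + 1) * (2 * ((G + 1) / 2)) := by ring
    have h4 : 2 * ((G + 1) / 2) = G + 1 := by
      obtain ⟨k, hk⟩ := hodd; omega
    rw [h3, h4] at h2
    have h5 : (l + 1) * (G + 1) ≡ (l + 1) * 1 [MOD G] := by
      apply Nat.ModEq.mul_left
      unfold Nat.ModEq
      simp [Nat.add_mod_left]
    have := h2.trans h5
    simpa using this
  have hfilter : (Finset.range G).filter (fun c => SSstar G l c) = {c0} := by
    ext c
    simp only [Finset.mem_filter, Finset.mem_range, Finset.mem_singleton]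
    constructor
    · rintro ⟨hcG, hstar⟩
      have hcc := star_imp_cong G l c hG hl hcG hstar
      exact two_cancel G c c0 hodd hcG hc0lt (hcc.trans hc0cong.symm)
    · rintro rfl
      exact ⟨hc0lt, cong_imp_star G l c0 hG hl hc0cong⟩
  rw [hfilter]
  simp
end

section
/- Let B be the G×G HeteroSAg segment-selection matrix with G even. Then any row containing two *'s has its two *'s in a pair of columns of the form (g, g + G/2) for some 0 ≤ g ≤ G/2 − 1, and such rows have odd index. -/
attribute [local instance] Classical.propDecidable

lemma ss_star_row (G l c : ℕ) (hG : 4 ≤ G) (hl : l < G) (hc : c < G)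
    (hs : SSstar G l c) : l = (2 * c + G - 1) % G := by
  by_contra hne
  have hG0 : 0 < G := by omega
  set t := (l + 2 * G - 2 * c) % G with ht
  have htG : t < G := Nat.mod_lt _ hG0
  have htl : (2 * c + t) % G = l := by
    rw [ht, Nat.add_mod_mod]
    have h2 : 2 * c + (l + 2 * G - 2 * c) = l + G + G := by omega
    rw [h2, Nat.add_mod_right, Nat.add_mod_right, Nat.mod_eq_of_lt hl]
  by_cases hcase : c + t + 2 ≤ G
  · exact hs c t ⟨hcase, htl.symm, Or.inl rfl⟩
  · have ht1 : t ≠ G - 1 := by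
      intro h
      apply hne
      rw [← htl, h]
      congr 1
      omega
    refine hs (c + 1 + t - G) (G - t - 2) ⟨by omega, ?_, Or.inr (by omega)⟩
    have h3 : 2 * c + t = 2 * (c + 1 + t - G) + (G - t - 2) + G := by omega
    rw [← htl, h3, Nat.add_mod_right]

/-- For even `G ≥ 4`, whenever a row `l` of the HeteroSAg SS matrix contains two `*`'s,
these `*`'s sit in a pair of columns of the form `(g, g + G/2)` with `0 ≤ g ≤ G/2 − 1`,
and the row index `l` is odd. -/
theorem ss_matrix_star_pairs_even (G : ℕ) (hG : 4 ≤ G) (heven : Even G)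
    (l : ℕ) (hl : l < G) (c c' : ℕ) (hc : c < G) (hc' : c' < G) (hlt : c < c')
    (hs : SSstar G l c) (hs' : SSstar G l c') :
    c' = c + G / 2 ∧ c < G / 2 ∧ l % 2 = 1 := by
  obtain ⟨m, hm⟩ := heven
  have h1 := ss_star_row G l c hG hl hc hs
  have h2 := ss_star_row G l c' hG hl hc' hs'
  have hmod : (2 * c + G - 1) % G = (2 * c' + G - 1) % G := h1.symm.trans h2
  have hdvd : G ∣ (2 * c' + G - 1) - (2 * c + G - 1) :=
    (Nat.modEq_iff_dvd' (by omega)).mp hmod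
  have heq : (2 * c' + G - 1) - (2 * c + G - 1) = 2 * (c' - c) := by omega
  rw [heq] at hdvd
  obtain ⟨k, hk⟩ := hdvd
  have hkne : k ≠ 0 := by
    intro h; rw [h, Nat.mul_zero] at hk; omega
  have hklt : k < 2 := by
    by_contra hk2
    push_neg at hk2
    have : G * 2 ≤ G * k := Nat.mul_le_mul_left G hk2
    omega
  have hk1 : k = 1 := by omega
  rw [hk1, Nat.mul_one] at hk
  have hdm := Nat.div_add_mod (2 * c + G - 1) G
  rw [← h1] at hdm
  obtain ⟨p, hp⟩ := (Even.mul_right ⟨m, hm⟩ ((2 * c + G - 1) / G) : Even _)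
  rw [hp] at hdm
  refine ⟨by omega, by omega, by omega⟩
end
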